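/- arXiv:1711.02123 — 2 statements merged into one kernel-verified Lean document; each statement's English description precedes it below -/
import Mathlib

section
/- The function d([x_{1:n}], [y_{1:n}]) = inf over isometries φ of M of Σ_{i=1}^n dist(x_i, φ(y_i)) defines a pseudometric on the set of isometry classes of n-tuples of points in M, and if M is rigid it is a metric (it separates distinct isometry classes). -/
open scoped BigOperators

variable {M : Type*} [MetricSpace M]

/-- Two `n`-tuples of points of `M` are equivalent when some isometry of `M`
carries one to the other (coordinatewise). -/
def TupleEquiv {n : ℕ} (x y : Fin n → M) : Prop :=
  ∃ φ : M ≃ᵢ M, ∀ i, φ (y i) = x i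

/-- The topology on the isometry group of `M`, induced from the space of
self-maps of `M` (topology of pointwise convergence). -/
noncomputable def isomGroupTopology (M : Type*) [MetricSpace M] :
    TopologicalSpace (M ≃ᵢ M) :=
  TopologicalSpace.induced (fun φ => (φ : M → M)) inferInstance

/-- A metric space is *rigid* when (i) any two tuples with identical pairwise
distance matrices are related by a global isometry and (ii) the isometry group
has finitely many connected components. -/
def Rigid (M : Type*) [MetricSpace M] : Prop :=
  (∀ (n : ℕ) (x y : Fin n → M),
      (∀ p q, dist (x p) (x q) = dist (y p) (y q)) → TupleEquiv x y) ∧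
  Finite (@ConnectedComponents (M ≃ᵢ M) (isomGroupTopology M))

/-- The candidate distance between isometry classes of `n`-tuples:
`inf_φ ∑ᵢ dist (xᵢ, φ(yᵢ))` over isometries `φ` of `M`. -/
noncomputable def tupleDist {n : ℕ} (x y : Fin n → M) : ℝ :=
  ⨅ φ : M ≃ᵢ M, ∑ i, dist (x i) (φ (y i))

private lemma tupleDist_bdd {n : ℕ} (x y : Fin n → M) :
    BddBelow (Set.range fun φ : M ≃ᵢ M => ∑ i, dist (x i) (φ (y i))) := by
  refine ⟨0, ?_⟩
  rintro a ⟨φ, rfl⟩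
  exact Finset.sum_nonneg fun i _ => dist_nonneg

private lemma tupleDist_le' {n : ℕ} (x y : Fin n → M) (φ : M ≃ᵢ M) :
    tupleDist x y ≤ ∑ i, dist (x i) (φ (y i)) :=
  ciInf_le (tupleDist_bdd x y) φ

private lemma tupleDist_nonneg' {n : ℕ} (x y : Fin n → M) : 0 ≤ tupleDist x y :=
  le_ciInf fun _ => Finset.sum_nonneg fun _ _ => dist_nonneg

private lemma tupleDist_symm_le {n : ℕ} (x y : Fin n → M) :
    tupleDist y x ≤ tupleDist x y := by
  refine le_ciInf fun φ => ?_
  calc tupleDist y x ≤ ∑ i, dist (y i) (φ.symm (x i)) := tupleDist_le' y x φ.symm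
    _ = ∑ i, dist (x i) (φ (y i)) := by
        refine Finset.sum_congr rfl fun i _ => ?_
        rw [← φ.dist_eq (y i) (φ.symm (x i)), φ.apply_symm_apply, dist_comm]

private lemma tupleDist_mono_equiv {n : ℕ} (x x' y y' : Fin n → M)
    (hx : TupleEquiv x x') (hy : TupleEquiv y y') :
    tupleDist x y ≤ tupleDist x' y' := by
  obtain ⟨φ₀, hφ₀⟩ := hx
  obtain ⟨ψ₀, hψ₀⟩ := hy
  refine le_ciInf fun φ => ?_
  calc tupleDist x y ≤ ∑ i, dist (x i) (((ψ₀.symm.trans φ).trans φ₀) (y i)) :=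
        tupleDist_le' x y _
    _ = ∑ i, dist (x' i) (φ (y' i)) := by
        refine Finset.sum_congr rfl fun i _ => ?_
        have h1 : ψ₀.symm (y i) = y' i := by rw [← hψ₀ i, ψ₀.symm_apply_apply]
        simp only [IsometryEquiv.trans_apply, h1, ← hφ₀ i]
        exact φ₀.dist_eq _ _

private lemma TupleEquiv.symm' {n : ℕ} {x y : Fin n → M} (h : TupleEquiv x y) :
    TupleEquiv y x := by
  obtain ⟨φ, hφ⟩ := h
  exact ⟨φ.symm, fun i => by rw [← hφ i, φ.symm_apply_apply]⟩

/-- **`tupleDist` is a pseudometric on isometry classes of `n`-tuples**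
(it vanishes on the diagonal, is nonnegative, symmetric, satisfies the triangle
inequality, and is well defined on isometry classes), **and when `M` is rigid
it is a metric**: it separates distinct isometry classes. -/
theorem tupleDist_pseudometric_and_metric (M : Type*) [MetricSpace M] (n : ℕ) :
    (∀ x : Fin n → M, tupleDist x x = 0) ∧
    (∀ x y : Fin n → M, 0 ≤ tupleDist x y) ∧
    (∀ x y : Fin n → M, tupleDist x y = tupleDist y x) ∧
    (∀ x y z : Fin n → M, tupleDist x z ≤ tupleDist x y + tupleDist y z) ∧
    (∀ x x' y y' : Fin n → M, TupleEquiv x x' → TupleEquiv y y' →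
        tupleDist x y = tupleDist x' y') ∧
    (Rigid M → ∀ x y : Fin n → M, tupleDist x y = 0 → TupleEquiv x y) := by
  refine ⟨?_, fun x y => tupleDist_nonneg' x y,
    fun x y => le_antisymm (tupleDist_symm_le y x) (tupleDist_symm_le x y), ?_, ?_, ?_⟩
  · -- diagonal
    intro x
    refine le_antisymm ?_ (tupleDist_nonneg' x x)
    calc tupleDist x x ≤ ∑ i, dist (x i) ((IsometryEquiv.refl M) (x i)) :=
          tupleDist_le' x x _
      _ = 0 := by
          have h0 : ∀ i, dist (x i) ((IsometryEquiv.refl M) (x i)) = 0 :=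
            fun i => dist_self _
          simp [h0]
  · -- triangle
    intro x y z
    have key : ∀ φ ψ : M ≃ᵢ M,
        tupleDist x z ≤ (∑ i, dist (x i) (φ (y i))) + ∑ i, dist (y i) (ψ (z i)) := by
      intro φ ψ
      calc tupleDist x z ≤ ∑ i, dist (x i) ((ψ.trans φ) (z i)) := tupleDist_le' x z _
        _ ≤ ∑ i, (dist (x i) (φ (y i)) + dist (φ (y i)) ((ψ.trans φ) (z i))) :=
            Finset.sum_le_sum fun i _ => dist_triangle _ _ _
        _ = (∑ i, dist (x i) (φ (y i))) + ∑ i, dist (y i) (ψ (z i)) := by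
            rw [Finset.sum_add_distrib]
            congr 1
            refine Finset.sum_congr rfl fun i _ => ?_
            exact φ.dist_eq _ _
    have h1 : ∀ φ : M ≃ᵢ M, tupleDist x z - (∑ i, dist (x i) (φ (y i))) ≤ tupleDist y z :=
      fun φ => le_ciInf fun ψ => sub_le_iff_le_add'.2 (key φ ψ)
    have h2 : tupleDist x z - tupleDist y z ≤ tupleDist x y :=
      le_ciInf fun φ => sub_le_iff_le_add.2 <| by
        have := h1 φ
        linarith
    linarith
  · -- well-definedness
    intro x x' y y' hx hy
    exact le_antisymm (tupleDist_mono_equiv x x' y y' hx hy)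
      (tupleDist_mono_equiv x' x y' y hx.symm' hy.symm')
  · -- rigidity
    intro hR x y h0
    refine hR.1 n x y fun p q => ?_
    have key : ∀ ε : ℝ, 0 < ε → ∃ φ : M ≃ᵢ M,
        dist (x p) (φ (y p)) < ε ∧ dist (x q) (φ (y q)) < ε := by
      intro ε hε
      have hlt : tupleDist x y < ε := by rw [h0]; exact hε
      obtain ⟨φ, hφ⟩ := exists_lt_of_ciInf_lt hlt
      refine ⟨φ, ?_, ?_⟩
      · exact lt_of_le_of_lt
          (Finset.single_le_sum (f := fun i => dist (x i) (φ (y i)))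
            (fun i _ => dist_nonneg) (Finset.mem_univ p)) hφ
      · exact lt_of_le_of_lt
          (Finset.single_le_sum (f := fun i => dist (x i) (φ (y i)))
            (fun i _ => dist_nonneg) (Finset.mem_univ q)) hφ
    refine le_antisymm ?_ ?_
    · refine le_of_forall_pos_le_add fun ε hε => ?_
      obtain ⟨φ, h1, h2⟩ := key (ε / 2) (by linarith)
      have hd : dist (φ (y p)) (φ (y q)) = dist (y p) (y q) := φ.dist_eq _ _
      have := dist_triangle4 (x p) (φ (y p)) (φ (y q)) (x q)
      rw [hd] at this
      rw [dist_comm (φ (y q)) (x q)] at this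
      linarith
    · refine le_of_forall_pos_le_add fun ε hε => ?_
      obtain ⟨φ, h1, h2⟩ := key (ε / 2) (by linarith)
      have hd : dist (y p) (y q) = dist (φ (y p)) (φ (y q)) := (φ.dist_eq _ _).symm
      have := dist_triangle4 (φ (y p)) (x p) (x q) (φ (y q))
      rw [← hd] at this
      rw [dist_comm (φ (y p)) (x p)] at this
      linarith
end

section
/- If B ≥ 1, d ≥ 1, and m > 2 log₂ B + 2d log₂(2/ln 2), then B (em/d)^d < 2^m. -/
/-- **Threshold for the polynomial growth function to drop below `2^m`:**
if `B ≥ 1`, `d ≥ 1` and `m > 2 log₂ B + 2 d log₂ (2 / ln 2)`, then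
`B (e m / d)^d < 2^m`. -/
theorem growth_function_below_two_pow (B d m : ℝ) (hB : 1 ≤ B) (hd : 1 ≤ d)
    (hm : 2 * Real.logb 2 B + 2 * d * Real.logb 2 (2 / Real.log 2) < m) :
    B * (Real.exp 1 * m / d) ^ d < 2 ^ m := by
  have hlog2 : 0 < Real.log 2 := Real.log_pos (by norm_num)
  have hlog2lt : Real.log 2 < 1 := by
    have h := Real.log_lt_sub_one_of_pos (by norm_num : (0:ℝ) < 2) (by norm_num)
    linarith
  have hB0 : 0 < B := lt_of_lt_of_le one_pos hB
  have hd0 : 0 < d := lt_of_lt_of_le one_pos hd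
  have hratio : (1:ℝ) < 2 / Real.log 2 := (one_lt_div hlog2).2 (by linarith)
  have hlbB : 0 ≤ Real.logb 2 B := Real.logb_nonneg (by norm_num) hB
  have hlb2 : 0 < Real.logb 2 (2 / Real.log 2) := Real.logb_pos (by norm_num) hratio
  have hm0 : 0 < m := by nlinarith
  have he : (0:ℝ) < Real.exp 1 := Real.exp_pos 1
  set x : ℝ := Real.exp 1 * m / d with hxdef
  have hx : 0 < x := by positivity
  -- tangent-line bound: log x ≤ x * log 2 / (2 e) + log (2 / log 2)
  have hc : (0:ℝ) < 2 * Real.exp 1 / Real.log 2 := by positivity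
  have h1 := Real.log_le_sub_one_of_pos (div_pos hx hc)
  rw [Real.log_div hx.ne' hc.ne'] at h1
  have hlogc : Real.log (2 * Real.exp 1 / Real.log 2)
      = Real.log (2 / Real.log 2) + 1 := by
    rw [Real.log_div (by positivity) hlog2.ne',
        Real.log_mul two_ne_zero (Real.exp_pos 1).ne', Real.log_exp,
        Real.log_div two_ne_zero hlog2.ne']
    ring
  have hxc : x / (2 * Real.exp 1 / Real.log 2) = x * Real.log 2 / (2 * Real.exp 1) :=
    div_div_eq_mul_div x (2 * Real.exp 1) (Real.log 2)
  have hlogx : Real.log x ≤ x * Real.log 2 / (2 * Real.exp 1) + Real.log (2 / Real.log 2) := by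
    rw [hlogc] at h1; rw [← hxc]; linarith
  have hdx : d * x = Real.exp 1 * m := by
    rw [hxdef]; field_simp
  have hkey : d * Real.log x ≤ m * Real.log 2 / 2 + d * Real.log (2 / Real.log 2) := by
    have h2 : d * Real.log x ≤ d * (x * Real.log 2 / (2 * Real.exp 1))
        + d * Real.log (2 / Real.log 2) := by nlinarith [mul_le_mul_of_nonneg_left hlogx hd0.le]
    have h3 : d * (x * Real.log 2 / (2 * Real.exp 1)) = m * Real.log 2 / 2 := by
      field_simp
      nlinarith [hdx]
    linarith [h3 ▸ h2]
  -- convert hypothesis to natural logs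
  rw [Real.logb, Real.logb] at hm
  have hm' : 2 * Real.log B + 2 * d * Real.log (2 / Real.log 2) < m * Real.log 2 := by
    have := mul_lt_mul_of_pos_right hm hlog2
    calc 2 * Real.log B + 2 * d * Real.log (2 / Real.log 2)
        = (2 * (Real.log B / Real.log 2) + 2 * d * (Real.log (2 / Real.log 2) / Real.log 2))
            * Real.log 2 := by field_simp
      _ < m * Real.log 2 := this
  have hlt : Real.log B + d * Real.log x < m * Real.log 2 := by linarith
  -- exponentiate
  have hrw : B * x ^ d = Real.exp (Real.log B + Real.log x * d) := by
    rw [Real.rpow_def_of_pos hx, Real.exp_add, Real.exp_log hB0]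
  have hrw2 : (2:ℝ) ^ m = Real.exp (Real.log 2 * m) := Real.rpow_def_of_pos (by norm_num) m
  rw [hrw, hrw2]
  exact Real.exp_lt_exp.2 (by nlinarith)
end
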